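/- For all integers m, n, r ≥ 0, in ℤ[q]: ∏_{ℓ=0}^{n-1} (1 + [ℓ+m+r]_q) = Σ_{i=0}^{n} [m+r]_q^{⟨n-i⟩} · qbinom(n,i) · ∏_{ℓ=0}^{i-1} (1 + [ℓ]_q). -/

import Mathlib

open Finset Polynomial

/-- The q-integer [n]_q = 1 + q + ⋯ + q^{n-1} in ℤ[q]. -/
noncomputable def qint (n : ℕ) : Polynomial ℤ := ∑ i ∈ range n, X ^ i

/-- The q-rising factorial [n]_q^{⟨m⟩} = ∏_{i=n}^{n+m-1} [i]_q. -/
noncomputable def qrise (n m : ℕ) : Polynomial ℤ := ∏ i ∈ range m, qint (n + i)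

/-- The q-binomial coefficient. -/
noncomputable def qbinom : ℕ → ℕ → Polynomial ℤ
  | _, 0 => 1
  | 0, _ + 1 => 0
  | n + 1, k + 1 => qbinom n k + X ^ (k + 1) * qbinom n (k + 1)

/-! With `s = m + r`, the identity holds with `1` replaced by any polynomial `c`. Induction on `n`
rests on the splitting `c + [s+n]_q = (c + [i]_q) + q^i [s+n-i]_q`: the first summand raises the
product `∏_{ℓ<i} (c + [ℓ]_q)` by one factor, the second raises the rising factorial by one factor,
and the q-Pascal rule reassembles the two resulting sums. -/

lemma qint_add (a b : ℕ) : qint (a + b) = qint a + X ^ a * qint b := by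
  simp only [qint, sum_range_add, mul_sum, pow_add]

lemma qrise_succ (a m : ℕ) : qrise a (m + 1) = qrise a m * qint (a + m) :=
  prod_range_succ _ _

lemma qbinom_zero_right (n : ℕ) : qbinom n 0 = 1 := by
  cases n <;> rfl

lemma qbinom_succ_succ (n k : ℕ) :
    qbinom (n + 1) (k + 1) = qbinom n k + X ^ (k + 1) * qbinom n (k + 1) :=
  rfl

lemma qbinom_eq_zero_of_lt : ∀ {n k : ℕ}, n < k → qbinom n k = 0
  | 0, _ + 1, _ => rfl
  | n + 1, k + 1, h => by
    rw [qbinom_succ_succ, qbinom_eq_zero_of_lt (by omega : n < k),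
      qbinom_eq_zero_of_lt (by omega : n < k + 1), mul_zero, add_zero]

noncomputable def prodAddQint (c : Polynomial ℤ) (a n : ℕ) : Polynomial ℤ :=
  ∏ ℓ ∈ range n, (c + qint (a + ℓ))

lemma prodAddQint_succ (c : Polynomial ℤ) (a n : ℕ) :
    prodAddQint c a (n + 1) = prodAddQint c a n * (c + qint (a + n)) :=
  prod_range_succ _ _

lemma sum_qbinom_succ (g h : ℕ → Polynomial ℤ) (n : ℕ) :
    ∑ i ∈ range (n + 2), g (n + 1 - i) * qbinom (n + 1) i * h i =
      ∑ i ∈ range (n + 1), g (n - i) * qbinom n i * h (i + 1) +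
        ∑ i ∈ range (n + 1), X ^ i * g (n + 1 - i) * qbinom n i * h i := by
  have shifted : ∑ i ∈ range (n + 2), X ^ i * g (n + 1 - i) * qbinom n i * h i =
      g (n + 1) * h 0 +
        ∑ i ∈ range (n + 1), X ^ (i + 1) * g (n - i) * qbinom n (i + 1) * h (i + 1) := by
    rw [sum_range_succ', add_comm]
    simp [qbinom_zero_right]
  have last_vanishes : ∑ i ∈ range (n + 2), X ^ i * g (n + 1 - i) * qbinom n i * h i =
      ∑ i ∈ range (n + 1), X ^ i * g (n + 1 - i) * qbinom n i * h i := by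
    rw [sum_range_succ, qbinom_eq_zero_of_lt (Nat.lt_succ_self n), mul_zero, zero_mul, add_zero]
  rw [← last_vanishes, shifted, sum_range_succ', qbinom_zero_right]
  simp only [Nat.sub_zero, mul_one, qbinom_succ_succ, Nat.reduceSubDiff]
  rw [add_left_comm (∑ i ∈ range (n + 1), g (n - i) * qbinom n i * h (i + 1)), ← sum_add_distrib,
    add_comm]
  congr 1
  refine sum_congr rfl fun i _ => ?_
  ring

lemma prodAddQint_eq_sum (c : Polynomial ℤ) (s n : ℕ) :
    prodAddQint c s n =
      ∑ i ∈ range (n + 1), qrise s (n - i) * qbinom n i * prodAddQint c 0 i := by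
  induction n with
  | zero => simp [prodAddQint, qrise, qbinom_zero_right]
  | succ n ih =>
    have split_term : ∀ i ∈ range (n + 1),
        qrise s (n - i) * qbinom n i * prodAddQint c 0 i * (c + qint (s + n)) =
          qrise s (n - i) * qbinom n i * prodAddQint c 0 (i + 1) +
            X ^ i * qrise s (n + 1 - i) * qbinom n i * prodAddQint c 0 i := by
      intro i hmem
      have hi : i ≤ n := Nat.lt_succ_iff.mp (mem_range.mp hmem)
      rw [show s + n = i + (s + (n - i)) by omega, show n + 1 - i = n - i + 1 by omega,
        qint_add, qrise_succ, prodAddQint_succ, zero_add]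
      ring
    rw [prodAddQint_succ, ih, sum_mul, sum_congr rfl split_term, sum_add_distrib,
      sum_qbinom_succ]

theorem qprod_identity (m n r : ℕ) :
    ∏ ℓ ∈ range n, (1 + qint (ℓ + m + r)) =
      ∑ i ∈ range (n + 1), qrise (m + r) (n - i) * qbinom n i *
        ∏ ℓ ∈ range i, (1 + qint ℓ) := by
  have h := prodAddQint_eq_sum 1 (m + r) n
  simp only [prodAddQint, zero_add] at h
  rw [← h]
  exact prod_congr rfl fun ℓ _ => by rw [show ℓ + m + r = m + r + ℓ by ring]
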